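/- arXiv:2501.00187 — 5 statements merged into one kernel-verified Lean document; each statement's English description precedes it below -/
import Mathlib

section
/- If S, I, R solve the classical SIR system S' = -bSI, I' = bSI - cI, R' = cI with S(0)=1, I(0)=d, R(0)=0 and S(t) > 0 for all t, then S satisfies the epidemic curve equation S' = -b·S·(1 + d - S + (c/b)·log S). -/
/-!
Two first integrals: the total population `S + I + R` is conserved, and since
`(c / b) (log S)' = -c I = -R'`, so is `R + (c / b) log S`. With the initial data they give
`R = -(c / b) log S` and `I = 1 + d - S - R`; substituting `I` into `S' = -b S I` is the claim.
-/

open Real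

theorem is_const_of_hasDerivAt_zero {f : ℝ → ℝ} (hf : ∀ t, HasDerivAt f 0 t) (t s : ℝ) :
    f t = f s :=
  is_const_of_deriv_eq_zero (fun x ↦ (hf x).differentiableAt) (fun x ↦ (hf x).deriv) t s

namespace SIR

variable {b c : ℝ} {S I R : ℝ → ℝ}

theorem total_population_eq (hS : ∀ t, HasDerivAt S (-b * S t * I t) t)
    (hI : ∀ t, HasDerivAt I (b * S t * I t - c * I t) t)
    (hR : ∀ t, HasDerivAt R (c * I t) t) (t : ℝ) :
    S t + I t + R t = S 0 + I 0 + R 0 :=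
  is_const_of_hasDerivAt_zero
    (fun t ↦ (((hS t).add (hI t)).add (hR t)).congr_deriv (by ring)) t 0

theorem removed_add_log_susceptible_eq (hb : b ≠ 0)
    (hS : ∀ t, HasDerivAt S (-b * S t * I t) t)
    (hR : ∀ t, HasDerivAt R (c * I t) t) (hS_ne : ∀ t, S t ≠ 0) (t : ℝ) :
    R t + c / b * log (S t) = R 0 + c / b * log (S 0) := by
  refine is_const_of_hasDerivAt_zero (f := fun t ↦ R t + c / b * log (S t)) (fun t ↦ ?_) t 0
  refine ((hR t).add (((hS t).log (hS_ne t)).const_mul (c / b))).congr_deriv ?_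
  field_simp [hS_ne t]
  ring

end SIR

theorem sir_epidemic_curve_general (b c d : ℝ) (hb : 0 < b)
    (S I R : ℝ → ℝ)
    (hS : ∀ t, HasDerivAt S (-b * S t * I t) t)
    (hI : ∀ t, HasDerivAt I (b * S t * I t - c * I t) t)
    (hR : ∀ t, HasDerivAt R (c * I t) t)
    (hS0 : S 0 = 1) (hI0 : I 0 = d) (hR0 : R 0 = 0)
    (hSpos : ∀ t, 0 < S t) :
    ∀ t, HasDerivAt S (-b * S t * (1 + d - S t + (c / b) * Real.log (S t))) t := by
  intro t
  have hN := SIR.total_population_eq hS hI hR t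
  have hH := SIR.removed_add_log_susceptible_eq hb.ne' hS hR (fun t ↦ (hSpos t).ne') t
  rw [hS0, hI0, hR0] at hN
  rw [hS0, hR0, log_one] at hH
  convert hS t using 2
  linarith

/-- Epidemic curve equation for the classical SIR model. -/
theorem sir_epidemic_curve (b c d : ℝ) (hb : 0 < b) (hc : 0 < c) (hd : 0 < d)
    (S I R : ℝ → ℝ)
    (hS : ∀ t, HasDerivAt S (-b * S t * I t) t)
    (hI : ∀ t, HasDerivAt I (b * S t * I t - c * I t) t)
    (hR : ∀ t, HasDerivAt R (c * I t) t)
    (hS0 : S 0 = 1) (hI0 : I 0 = d) (hR0 : R 0 = 0)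
    (hSpos : ∀ t, 0 < S t) :
    ∀ t, HasDerivAt S (-b * S t * (1 + d - S t + (c / b) * Real.log (S t))) t :=
  sir_epidemic_curve_general b c d hb S I R hS hI hR hS0 hI0 hR0 hSpos
end

section
/- Suppose [S], [SS], [SI] : ℝ → ℝ satisfy [S]' = -β[SI] and [SS]' = -2βκ·[SI][SS]/[S], with [S] > 0 everywhere and initial condition [SS](0) = μ·[S](0)^{2κ}. Then [SS](t) = μ·[S](t)^{2κ} for all t ≥ 0. -/
/-! The equations give `[SS]' = 2κ [SS] [S]' / [S]`, so `[SS] / [S] ^ (2κ)` has zero derivative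
on `[0, ∞)`; it is therefore constant, equal to its initial value `μ`. -/

open Set

theorem hasDerivAt_div_rpow_eq_zero {f g : ℝ → ℝ} {f' p x : ℝ} (hf : HasDerivAt f f' x)
    (hfx : 0 < f x) (hg : HasDerivAt g (p * f' * g x / f x) x) :
    HasDerivAt (fun y => g y / f y ^ p) 0 x := by
  have hfp : HasDerivAt (fun y => f y ^ p) (f' * p * f x ^ (p - 1)) x :=
    hf.rpow_const (Or.inl hfx.ne')
  refine (hg.div hfp (Real.rpow_pos_of_pos hfx p).ne').congr_deriv ?_
  rw [Real.rpow_sub_one hfx.ne']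
  field_simp
  ring

theorem eq_of_hasDerivAt_zero_of_le {f : ℝ → ℝ} {a : ℝ} (hf : ∀ x, a ≤ x → HasDerivAt f 0 x)
    {t : ℝ} (ht : a ≤ t) : f t = f a :=
  constant_of_has_deriv_right_zero (fun x hx => (hf x hx.1).continuousAt.continuousWithinAt)
    (fun x hx => (hf x hx.1).hasDerivWithinAt) t (right_mem_Icc.mpr ht)

theorem pairwise_SS_formula_general (β κ μ : ℝ)
    (S SS SI : ℝ → ℝ)
    (hSpos : ∀ t, 0 < S t)
    (hS : ∀ t, 0 ≤ t → HasDerivAt S (-β * SI t) t)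
    (hSS : ∀ t, 0 ≤ t → HasDerivAt SS (-2 * β * κ * SI t * SS t / S t) t)
    (hSS0 : SS 0 = μ * S 0 ^ (2 * κ)) :
    ∀ t, 0 ≤ t → SS t = μ * S t ^ (2 * κ) := by
  intro t ht
  have hstationary : ∀ x, 0 ≤ x → HasDerivAt (fun y => SS y / S y ^ (2 * κ)) 0 x :=
    fun x hx => hasDerivAt_div_rpow_eq_zero (hS x hx) (hSpos x) (by convert hSS x hx using 2; ring)
  have hconst := eq_of_hasDerivAt_zero_of_le hstationary ht
  have hSp : ∀ y, S y ^ (2 * κ) ≠ 0 := fun y => (Real.rpow_pos_of_pos (hSpos y) _).ne'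
  rwa [hSS0, mul_div_cancel_right₀ _ (hSp 0), div_eq_iff (hSp t)] at hconst

/-- Closed pairwise SIR: `[SS](t) = μ [S](t)^(2κ)` for all `t ≥ 0`, given the initial
condition `[SS](0) = μ [S](0)^(2κ)`. -/
theorem pairwise_SS_formula (β κ μ : ℝ) (hβ : 0 < β) (hκ : 0 < κ) (hμ : 0 < μ)
    (S SS SI : ℝ → ℝ)
    (hSpos : ∀ t, 0 < S t)
    (hS : ∀ t, 0 ≤ t → HasDerivAt S (-β * SI t) t)
    (hSS : ∀ t, 0 ≤ t → HasDerivAt SS (-2 * β * κ * SI t * SS t / S t) t)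
    (hSS0 : SS 0 = μ * S 0 ^ (2 * κ)) :
    ∀ t, 0 ≤ t → SS t = μ * S t ^ (2 * κ) :=
  pairwise_SS_formula_general β κ μ S SS SI hSpos hS hSS hSS0
end

section
/- In the Poisson case κ = 1: if S > 0 is differentiable, [SI] is differentiable, S' = -β[SI], [SS] = μS², and [SI]' = -γ[SI] + β[SI]([SS] - [SI])/S - β[SI], with [SI](0) = μρ·S(0) and S(0) = 1, then [SI](t) = μ·S(t)·(1 + ρ - S(t) + ((β+γ)/(μβ))·log S(t)) for all t ≥ 0, and consequently S satisfies S' = -μβ·S·(1 + ρ - S + ((β+γ)/(μβ))·log S). -/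
/-!
Along solutions of the Poisson pairwise system the quantity
`β ([SI]/S + μ S) - (β + γ) log S` is conserved: differentiating it, the `[SI]²/S²` terms and
the `μ β [SI]` terms cancel, and what remains is `(β + γ) [SI]/S` twice with opposite signs.
Its initial value is `β μ (1 + ρ)`, and solving for `[SI]` gives the formula; substituting it
into `S' = -β [SI]` gives the equation for `S`.
-/

theorem eq_of_hasDerivAt_eq_zero_of_nonneg {f : ℝ → ℝ} (hf : ∀ t, 0 ≤ t → HasDerivAt f 0 t)
    {t : ℝ} (ht : 0 ≤ t) : f t = f 0 :=
  constant_of_has_deriv_right_zero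
    (fun x hx => (hf x hx.1).continuousAt.continuousWithinAt)
    (fun x hx => (hf x hx.1).hasDerivWithinAt) t ⟨ht, le_rfl⟩

noncomputable def pairwiseInvariant (β γ μ : ℝ) (S SI : ℝ → ℝ) (t : ℝ) : ℝ :=
  β * (SI t / S t + μ * S t) - (β + γ) * Real.log (S t)

section

variable {β γ μ : ℝ} {S SI : ℝ → ℝ} {t : ℝ}

theorem hasDerivAt_pairwiseInvariant (hSt : S t ≠ 0) (hS : HasDerivAt S (-β * SI t) t)
    (hSI : HasDerivAt SI
      (-γ * SI t + β * SI t * (μ * S t ^ 2 - SI t) / S t - β * SI t) t) :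
    HasDerivAt (pairwiseInvariant β γ μ S SI) 0 t := by
  have h := (((hSI.div hS hSt).add (hS.const_mul μ)).const_mul β).sub
    ((hS.log hSt).const_mul (β + γ))
  refine h.congr_deriv ?_
  field_simp
  ring

theorem pairwiseInvariant_zero {ρ : ℝ} (hSI0 : SI 0 = μ * ρ * S 0) (hS0 : S 0 = 1) :
    pairwiseInvariant β γ μ S SI 0 = β * μ * (1 + ρ) := by
  simp only [pairwiseInvariant, hSI0, hS0, Real.log_one]
  ring

theorem SI_eq_of_pairwiseInvariant_eq {ρ : ℝ} (hβ : β ≠ 0) (hμ : μ ≠ 0) (hSt : S t ≠ 0)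
    (h : pairwiseInvariant β γ μ S SI t = β * μ * (1 + ρ)) :
    SI t = μ * S t * (1 + ρ - S t + ((β + γ) / (μ * β)) * Real.log (S t)) := by
  unfold pairwiseInvariant at h
  field_simp at h ⊢
  linear_combination h

end

theorem poisson_pairwise_SI_formula_general (β γ μ ρ : ℝ)
    (hβ : 0 < β) (hμ : 0 < μ)
    (S SI : ℝ → ℝ)
    (hSpos : ∀ t, 0 < S t)
    (hS : ∀ t, 0 ≤ t → HasDerivAt S (-β * SI t) t)
    (hSI : ∀ t, 0 ≤ t → HasDerivAt SI
      (-γ * SI t + β * SI t * (μ * S t ^ 2 - SI t) / S t - β * SI t) t)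
    (hSI0 : SI 0 = μ * ρ * S 0) (hS0 : S 0 = 1) :
    ∀ t, 0 ≤ t →
      SI t = μ * S t * (1 + ρ - S t + ((β + γ) / (μ * β)) * Real.log (S t)) ∧
      HasDerivAt S
        (-(μ * β) * S t * (1 + ρ - S t + ((β + γ) / (μ * β)) * Real.log (S t))) t := by
  intro t ht
  have hconserved : pairwiseInvariant β γ μ S SI t = β * μ * (1 + ρ) := by
    rw [← pairwiseInvariant_zero hSI0 hS0]
    exact eq_of_hasDerivAt_eq_zero_of_nonneg
      (fun s hs => hasDerivAt_pairwiseInvariant (hSpos s).ne' (hS s hs) (hSI s hs)) ht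
  have hform := SI_eq_of_pairwiseInvariant_eq hβ.ne' hμ.ne' (hSpos t).ne' hconserved
  refine ⟨hform, ?_⟩
  convert hS t ht using 1
  rw [hform]
  ring

/-- Poisson case (`κ = 1`) of the closed pairwise SIR model: the explicit formula for
`[SI]` and the resulting epidemic curve equation for `S`. -/
theorem poisson_pairwise_SI_formula (β γ μ ρ : ℝ)
    (hβ : 0 < β) (hγ : 0 < γ) (hμ : 0 < μ) (hρ : 0 < ρ)
    (S SI : ℝ → ℝ)
    (hSpos : ∀ t, 0 < S t)
    (hS : ∀ t, 0 ≤ t → HasDerivAt S (-β * SI t) t)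
    (hSI : ∀ t, 0 ≤ t → HasDerivAt SI
      (-γ * SI t + β * SI t * (μ * S t ^ 2 - SI t) / S t - β * SI t) t)
    (hSI0 : SI 0 = μ * ρ * S 0) (hS0 : S 0 = 1) :
    ∀ t, 0 ≤ t →
      SI t = μ * S t * (1 + ρ - S t + ((β + γ) / (μ * β)) * Real.log (S t)) ∧
      HasDerivAt S
        (-(μ * β) * S t * (1 + ρ - S t + ((β + γ) / (μ * β)) * Real.log (S t))) t :=
  poisson_pairwise_SI_formula_general β γ μ ρ hβ hμ S SI hSpos hS hSI hSI0 hS0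
end

section
/- Suppose S solves S' = -β̃·S·G(S) on [0,∞) with G(S) = 1 + ρ - S + R̃₀⁻¹ log S, S(0) = 1, β̃ > 0, ρ > 0, R̃₀ > 1, and S∞ ∈ (0,1) is the unique zero of G. Then S is strictly decreasing and S(t) > S∞ for all t ≥ 0. -/
/-!
`G` is concave on `(0, ∞)` with `G S∞ = 0 < ρ = G 1`, hence positive on `(S∞, 1]`, and lies
below its tangent line at `S∞`, so `x G x ≤ (R̃₀⁻¹ / S∞ - 1) (x - S∞)` on `(S∞, 1]`. Thus
`f = S - S∞` satisfies `f' ≥ -L f` wherever `f > 0`; comparing with the barrier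
`f 0 · exp (-(L + 1) t)`, which cannot be touched from above, keeps `f` positive. Then
`S' = -β̃ S G(S) < 0`.
-/

open Real Set

theorem pos_of_neg_mul_le_deriv {f f' : ℝ → ℝ} {L a : ℝ}
    (hf : ∀ t, a ≤ t → HasDerivAt f (f' t) t) (hf' : ∀ t, a ≤ t → 0 < f t → -L * f t ≤ f' t)
    (ha : 0 < f a) {t : ℝ} (ht : a ≤ t) : 0 < f t := by
  set barrier : ℝ → ℝ := fun s ↦ f a * exp (-(L + 1) * (s - a))
  have hbarrier : ∀ s, HasDerivAt barrier (-(L + 1) * barrier s) s := fun s ↦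
    ((((hasDerivAt_id s).sub_const a).const_mul (-(L + 1))).exp.const_mul (f a)).congr_deriv
      (by simp only [barrier, id]; ring)
  have hle : barrier t ≤ f t :=
    image_le_of_deriv_right_lt_deriv_boundary' (B := f) (B' := f')
      (fun s _ ↦ (hbarrier s).continuousAt.continuousWithinAt)
      (fun s _ ↦ (hbarrier s).hasDerivWithinAt) (by simp [barrier])
      (fun s hs ↦ (hf s hs.1).continuousAt.continuousWithinAt)
      (fun s hs ↦ (hf s hs.1).hasDerivWithinAt)
      (fun s hs heq ↦ by
        have hpos : 0 < f s := heq ▸ by positivity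
        rw [heq]
        linarith [hf' s hs.1 hpos])
      ⟨ht, le_rfl⟩
  exact lt_of_lt_of_le (by positivity) hle

namespace PoissonEpidemic

/-- The paper's `G`, with `c` standing for `R̃₀⁻¹`. -/
noncomputable def G (ρ c x : ℝ) : ℝ := 1 + ρ - x + c * log x

variable {ρ c a x : ℝ}

theorem G_one : G ρ c 1 = ρ := by simp [G]

theorem concaveOn_G (hc : 0 ≤ c) : ConcaveOn ℝ (Ioi 0) (G ρ c) :=
  ((concaveOn_const (1 + ρ) (convex_Ioi 0)).sub (convexOn_id (convex_Ioi 0))).add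
    (strictConcaveOn_log_Ioi.concaveOn.smul hc)

theorem G_pos_of_mem_Ioc (hρ : 0 < ρ) (hc : 0 ≤ c) (ha : 0 < a) (hGa : G ρ c a = 0)
    (hx : x ∈ Ioc a 1) : 0 < G ρ c x := by
  rcases hx.2.eq_or_lt with rfl | hx1
  · rwa [G_one]
  by_contra! hGx
  have h1 : G ρ c 1 ≤ G ρ c x :=
    (concaveOn_G hc).left_le_of_le_right (mem_Ioi.2 one_pos) (mem_Ioi.2 ha)
      (by rw [openSegment_symm, openSegment_eq_Ioo (hx.1.trans hx1)]; exact ⟨hx.1, hx1⟩)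
      (hGx.trans hGa.ge)
  rw [G_one] at h1
  linarith

theorem G_le_tangent (hc : 0 ≤ c) (ha : 0 < a) (hGa : G ρ c a = 0) (hx : 0 < x) :
    G ρ c x ≤ (c / a - 1) * (x - a) := by
  have hlog : log x - log a ≤ (x - a) / a := by
    have := log_le_sub_one_of_pos (div_pos hx ha)
    rwa [sub_div, div_self ha.ne', ← log_div hx.ne' ha.ne']
  calc G ρ c x = G ρ c x - G ρ c a := by rw [hGa, sub_zero]
    _ = c * (log x - log a) - (x - a) := by unfold G; ring
    _ ≤ c * ((x - a) / a) - (x - a) := by gcongr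
    _ = (c / a - 1) * (x - a) := by ring

theorem mul_G_le_of_mem_Ioc (hρ : 0 < ρ) (hc : 0 ≤ c) (ha : 0 < a) (hGa : G ρ c a = 0)
    (hx : x ∈ Ioc a 1) : x * G ρ c x ≤ (c / a - 1) * (x - a) := by
  have hGx := G_pos_of_mem_Ioc hρ hc ha hGa hx
  calc x * G ρ c x ≤ 1 * G ρ c x := by gcongr; exact hx.2
    _ = G ρ c x := one_mul _
    _ ≤ (c / a - 1) * (x - a) := G_le_tangent hc ha hGa (ha.trans hx.1)

end PoissonEpidemic

open PoissonEpidemic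

theorem S_decreasing_above_Sinf_general (βt ρ R0 Sinf : ℝ)
    (hβt : 0 < βt) (hρ : 0 < ρ) (hR0 : 1 < R0)
    (hSinf : Sinf ∈ Set.Ioo (0 : ℝ) 1)
    (hzero : 1 + ρ - Sinf + R0⁻¹ * Real.log Sinf = 0)
    (S : ℝ → ℝ)
    (hrange : ∀ t, 0 ≤ t → S t ∈ Set.Ioc (0 : ℝ) 1)
    (hS0 : S 0 = 1)
    (hS : ∀ t, 0 ≤ t →
      HasDerivAt S (-βt * S t * (1 + ρ - S t + R0⁻¹ * Real.log (S t))) t) :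
    StrictAntiOn S (Set.Ici (0 : ℝ)) ∧ ∀ t, 0 ≤ t → Sinf < S t := by
  have hc : 0 ≤ R0⁻¹ := inv_nonneg.2 (zero_le_one.trans hR0.le)
  have habove : ∀ t, 0 ≤ t → Sinf < S t := fun t ht ↦ sub_pos.1 <|
    pos_of_neg_mul_le_deriv (f := fun t ↦ S t - Sinf) (L := βt * (R0⁻¹ / Sinf - 1))
      (fun t ht ↦ (hS t ht).sub_const Sinf)
      (fun t ht hpos ↦ by
        show _ ≤ -βt * S t * G ρ R0⁻¹ (S t)
        have := mul_G_le_of_mem_Ioc hρ hc hSinf.1 hzero ⟨sub_pos.1 hpos, (hrange t ht).2⟩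
        nlinarith)
      (by simpa [hS0] using hSinf.2) ht
  refine ⟨strictAntiOn_of_hasDerivWithinAt_neg (convex_Ici 0)
    (fun t ht ↦ (hS t ht).continuousAt.continuousWithinAt)
    (fun t ht ↦ (hS t (interior_subset ht)).hasDerivWithinAt) (fun t ht ↦ ?_), habove⟩
  obtain ⟨hSt0, hSt1⟩ := hrange t (interior_subset ht)
  have hG : 0 < G ρ R0⁻¹ (S t) :=
    G_pos_of_mem_Ioc hρ hc hSinf.1 hzero ⟨habove t (interior_subset ht), hSt1⟩
  show -βt * S t * G ρ R0⁻¹ (S t) < 0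
  linarith [mul_pos (mul_pos hβt hSt0) hG]

/-- Solutions of the Poisson epidemic curve equation are strictly decreasing and stay
above the unique zero `S∞` of `G`. -/
theorem S_decreasing_above_Sinf (βt ρ R0 Sinf : ℝ)
    (hβt : 0 < βt) (hρ : 0 < ρ) (hR0 : 1 < R0)
    (hSinf : Sinf ∈ Set.Ioo (0 : ℝ) 1)
    (hzero : 1 + ρ - Sinf + R0⁻¹ * Real.log Sinf = 0)
    (huniq : ∀ x ∈ Set.Ioo (0 : ℝ) 1, 1 + ρ - x + R0⁻¹ * Real.log x = 0 → x = Sinf)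
    (S : ℝ → ℝ)
    (hrange : ∀ t, 0 ≤ t → S t ∈ Set.Ioc (0 : ℝ) 1)
    (hS0 : S 0 = 1)
    (hS : ∀ t, 0 ≤ t →
      HasDerivAt S (-βt * S t * (1 + ρ - S t + R0⁻¹ * Real.log (S t))) t) :
    StrictAntiOn S (Set.Ici (0 : ℝ)) ∧ ∀ t, 0 ≤ t → Sinf < S t :=
  S_decreasing_above_Sinf_general βt ρ R0 Sinf hβt hρ hR0 hSinf hzero S hrange hS0 hS
end

section
/- For the general closed pairwise system with κ ≠ 1: if S > 0 solves S' = -β[SI] with [SS] = μS^{2κ} and [SI]' = -γ[SI] + βκ[SI]([SS]-[SI])/S - β[SI], [SI](0) = μρ, S(0) = 1, then [SI](t) = μ·(β̃(S^κ - S^{2κ}) + (γ̃/(1-κ))·S·(1 - S^{κ-1}) + ρ̃·S^κ)/β̃ where β̃ = μβ, γ̃ = β + γ, ρ̃ = βμρ; equivalently -S' = β̃(S^κ - S^{2κ}) + (γ̃/(1-κ))S(1 - S^{κ-1}) + ρ̃ S^κ. -/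
/-! Along a solution, `[SI] S^(-κ) + μ S^κ - c S^(1-κ)` with `c = (β + γ) / (β (1 - κ))` has
zero derivative: differentiating `[SI] S^(-κ)` cancels the quadratic term `-βκ[SI]²/S` of the
`[SI]` equation against `-κ S'/S`, and the two remaining terms are `-μ (S^κ)'` and
`c (S^(1-κ))'` because `S' = -β[SI]`. This first integral, evaluated at `t = 0`, gives `[SI]`
as an explicit function of `S`, and substituting it into `S' = -β[SI]` gives the curve equation. -/

open Real Set

namespace PairwiseSIR

variable (β γ μ κ : ℝ) (S SI : ℝ → ℝ)

noncomputable def firstIntegral (t : ℝ) : ℝ :=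
  SI t * S t ^ (-κ) + μ * S t ^ κ - (β + γ) / (β * (1 - κ)) * S t ^ (1 - κ)

variable {β γ μ κ S SI}

theorem hasDerivAt_firstIntegral (hβ : β ≠ 0) (hκ1 : κ ≠ 1) {x : ℝ} (hSx : 0 < S x)
    (hS : HasDerivAt S (-β * SI x) x)
    (hSI : HasDerivAt SI
      (-γ * SI x + β * κ * SI x * (μ * S x ^ (2 * κ) - SI x) / S x - β * SI x) x) :
    HasDerivAt (firstIntegral β γ μ κ S SI) 0 x := by
  have hS0 : S x ≠ 0 := hSx.ne'
  have h1κ : 1 - κ ≠ 0 := sub_ne_zero.mpr hκ1.symm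
  have hpow : S x ^ κ ≠ 0 := (rpow_pos_of_pos hSx κ).ne'
  have hderiv := ((hSI.mul (hS.rpow_const (p := -κ) (Or.inl hS0))).add
    ((hS.rpow_const (p := κ) (Or.inl hS0)).const_mul μ)).sub
    ((hS.rpow_const (p := 1 - κ) (Or.inl hS0)).const_mul ((β + γ) / (β * (1 - κ))))
  refine hderiv.congr_deriv ?_
  rw [show 2 * κ = κ + κ by ring, show 1 - κ - 1 = -κ by ring,
    rpow_add hSx, rpow_sub_one hS0, rpow_sub_one hS0, rpow_neg hSx.le]
  field_simp
  ring

theorem firstIntegral_eq_of_nonneg (hβ : β ≠ 0) (hκ1 : κ ≠ 1) (hSpos : ∀ t, 0 < S t)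
    (hS : ∀ t, 0 ≤ t → HasDerivAt S (-β * SI t) t)
    (hSI : ∀ t, 0 ≤ t → HasDerivAt SI
      (-γ * SI t + β * κ * SI t * (μ * S t ^ (2 * κ) - SI t) / S t - β * SI t) t)
    {t : ℝ} (ht : 0 ≤ t) :
    firstIntegral β γ μ κ S SI t = firstIntegral β γ μ κ S SI 0 := by
  have hderiv : ∀ x, 0 ≤ x → HasDerivAt (firstIntegral β γ μ κ S SI) 0 x := fun x hx =>
    hasDerivAt_firstIntegral hβ hκ1 (hSpos x) (hS x hx) (hSI x hx)
  exact constant_of_has_deriv_right_zero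
    (fun x hx => (hderiv x hx.1).continuousAt.continuousWithinAt)
    (fun x hx => (hderiv x hx.1).hasDerivWithinAt) t (right_mem_Icc.mpr ht)

theorem eq_of_firstIntegral_eq {t C : ℝ} (hSt : 0 < S t)
    (h : firstIntegral β γ μ κ S SI t = C) :
    SI t = C * S t ^ κ - μ * S t ^ (2 * κ) + (β + γ) / (β * (1 - κ)) * S t := by
  have hpow : S t ^ κ ≠ 0 := (rpow_pos_of_pos hSt κ).ne'
  rw [← h, firstIntegral, show 2 * κ = κ + κ by ring, show 1 - κ = -κ + 1 by ring, rpow_add hSt,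
    rpow_add hSt, rpow_one, rpow_neg hSt.le]
  field_simp
  ring

end PairwiseSIR

theorem general_pairwise_SI_formula_general (β γ μ ρ κ : ℝ)
    (hβ : 0 < β) (hμ : 0 < μ) (hκ1 : κ ≠ 1)
    (S SI : ℝ → ℝ)
    (hSpos : ∀ t, 0 < S t)
    (hS0 : S 0 = 1) (hSI0 : SI 0 = μ * ρ)
    (hS : ∀ t, 0 ≤ t → HasDerivAt S (-β * SI t) t)
    (hSI : ∀ t, 0 ≤ t → HasDerivAt SI
      (-γ * SI t + β * κ * SI t * (μ * S t ^ (2 * κ) - SI t) / S t - β * SI t) t) :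
    ∀ t, 0 ≤ t →
      SI t = μ * ((μ * β) * (S t ^ κ - S t ^ (2 * κ))
          + ((β + γ) / (1 - κ)) * S t * (1 - S t ^ (κ - 1))
          + (β * μ * ρ) * S t ^ κ) / (μ * β) ∧
      HasDerivAt S (-((μ * β) * (S t ^ κ - S t ^ (2 * κ))
          + ((β + γ) / (1 - κ)) * S t * (1 - S t ^ (κ - 1))
          + (β * μ * ρ) * S t ^ κ)) t := by
  intro t ht
  have hSt : 0 < S t := hSpos t
  have hSIt : SI t = (μ * ρ + μ - (β + γ) / (β * (1 - κ))) * S t ^ κ - μ * S t ^ (2 * κ)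
      + (β + γ) / (β * (1 - κ)) * S t := by
    refine PairwiseSIR.eq_of_firstIntegral_eq hSt ?_
    rw [PairwiseSIR.firstIntegral_eq_of_nonneg hβ.ne' hκ1 hSpos hS hSI ht]
    simp [PairwiseSIR.firstIntegral, hS0, hSI0]
  have hformula : SI t = μ * ((μ * β) * (S t ^ κ - S t ^ (2 * κ))
      + ((β + γ) / (1 - κ)) * S t * (1 - S t ^ (κ - 1))
      + (β * μ * ρ) * S t ^ κ) / (μ * β) := by
    have h1κ : 1 - κ ≠ 0 := sub_ne_zero.mpr hκ1.symm
    rw [hSIt, rpow_sub_one hSt.ne']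
    field_simp
    ring
  refine ⟨hformula, ?_⟩
  convert hS t ht using 1
  rw [hformula]
  field_simp

/-- General closed pairwise SIR system with `κ ≠ 1`: explicit formula for `[SI]` and the
resulting epidemic curve equation. -/
theorem general_pairwise_SI_formula (β γ μ ρ κ : ℝ)
    (hβ : 0 < β) (hγ : 0 < γ) (hμ : 0 < μ) (hρ : 0 < ρ) (hκ : 0 < κ) (hκ1 : κ ≠ 1)
    (S SI : ℝ → ℝ)
    (hSpos : ∀ t, 0 < S t)
    (hS0 : S 0 = 1) (hSI0 : SI 0 = μ * ρ)
    (hS : ∀ t, 0 ≤ t → HasDerivAt S (-β * SI t) t)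
    (hSI : ∀ t, 0 ≤ t → HasDerivAt SI
      (-γ * SI t + β * κ * SI t * (μ * S t ^ (2 * κ) - SI t) / S t - β * SI t) t) :
    ∀ t, 0 ≤ t →
      SI t = μ * ((μ * β) * (S t ^ κ - S t ^ (2 * κ))
          + ((β + γ) / (1 - κ)) * S t * (1 - S t ^ (κ - 1))
          + (β * μ * ρ) * S t ^ κ) / (μ * β) ∧
      HasDerivAt S (-((μ * β) * (S t ^ κ - S t ^ (2 * κ))
          + ((β + γ) / (1 - κ)) * S t * (1 - S t ^ (κ - 1))
          + (β * μ * ρ) * S t ^ κ)) t :=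
  general_pairwise_SI_formula_general β γ μ ρ κ hβ hμ hκ1 S SI hSpos hS0 hSI0 hS hSI
end
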